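/- arXiv:1309.7620 — 4 statements merged into one kernel-verified Lean document; each statement's English description precedes it below -/
import Mathlib

section
/- Let p be a prime and let m ≥ 1 and n ≥ 1 be natural numbers. Then the p-adic valuation of (m·p^n)! minus the p-adic valuation of m! is at least p^(n-1). (Equivalently, v_p((m·p^n)!/m!) = m·(p^n−1)/(p−1) ≥ p^(n-1).) -/
/-- Let `p` be a prime and `m ≥ 1`, `n ≥ 1`. Then
`v_p((m·p^n)!) - v_p(m!) ≥ p^(n-1)`. -/
theorem stmt_0 (p m n : ℕ) (hp : p.Prime) (hm : 1 ≤ m) (hn : 1 ≤ n) :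
    padicValNat p (Nat.factorial m) + p ^ (n - 1) ≤
      padicValNat p (Nat.factorial (m * p ^ n)) := by
  haveI : Fact p.Prime := ⟨hp⟩
  induction n with
  | zero => omega
  | succ n ih =>
    rcases Nat.eq_zero_or_pos n with rfl | hn'
    · simp only [pow_one, Nat.zero_add]
      rw [mul_comm, padicValNat_factorial_mul]
      simpa using hm
    · have h := ih hn'
      have : m * p ^ (n + 1) = p * (m * p ^ n) := by ring
      rw [this, padicValNat_factorial_mul]
      have hpow : p ^ (n - 1) * p = p ^ n := by
        rw [← pow_succ]; congr 1; omega
      have hle : p ^ n ≤ p ^ (n - 1) + m * p ^ n :=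
        le_trans (Nat.le_mul_of_pos_left _ hm) (Nat.le_add_left _ _)
      simp only [Nat.add_sub_cancel]
      omega
end

section
/- Fix a prime p and an integer e ≥ 1. The set R of formal power series Σ_{i≥0} a_i · t^i/⌊i/e⌋! in ℚ_p[[t]] with all coefficients a_i ∈ ℤ_p is a subring of ℚ_p[[t]]. -/
open PowerSeries
open scoped Nat

/-
Multiplying the `i`-th coefficient by `⌊i/e⌋!` clears its denominator, so the set in question is
`{f | ∀ i, ⌊i/e⌋! · coeff i f ∈ ℤ_p}`. Any weight sequence `d` with `d i · d j ∣ d (i + j)` cuts out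
a subring in this way: in `coeff n (f g) = ∑_{i+j=n} coeff i f · coeff j g`, each summand scaled
by `d n` is `(d n / (d i d j)) · (d i · coeff i f) · (d j · coeff j g)`. For `d i = ⌊i/e⌋!` the
divisibility follows from `⌊i/e⌋ + ⌊j/e⌋ ≤ ⌊(i+j)/e⌋` and `a! b! ∣ (a + b)!`.
-/

theorem Nat.factorial_div_mul_factorial_div_dvd (e i j : ℕ) :
    (i / e)! * (j / e)! ∣ ((i + j) / e)! :=
  (Nat.factorial_mul_factorial_dvd_factorial_add _ _).trans
    (Nat.factorial_dvd_factorial Nat.div_add_div_le_add_div)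

namespace PowerSeries

variable {R : Type*} [CommRing R]

def boundedDenomSubring (A : Subring R) (d : ℕ → ℕ) (hd : ∀ i j, d i * d j ∣ d (i + j)) :
    Subring R⟦X⟧ where
  carrier := {f | ∀ i, (d i : R) * coeff i f ∈ A}
  zero_mem' i := by simp
  one_mem' i := by
    rcases eq_or_ne i 0 with rfl | hi
    · simp [natCast_mem A]
    · simp [coeff_one, hi]
  add_mem' hf hg i := by simpa only [map_add, mul_add] using A.add_mem (hf i) (hg i)
  neg_mem' hf i := by simpa only [map_neg, mul_neg] using A.neg_mem (hf i)
  mul_mem' {f g} hf hg n := by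
    rw [coeff_mul, Finset.mul_sum]
    refine A.sum_mem fun q hq => ?_
    obtain ⟨c, hc⟩ := hd q.1 q.2
    rw [Finset.HasAntidiagonal.mem_antidiagonal.mp hq] at hc
    have hterm : (d n : R) * (coeff q.1 f * coeff q.2 g) =
        c * ((d q.1 : R) * coeff q.1 f) * ((d q.2 : R) * coeff q.2 g) := by
      rw [hc]; push_cast; ring
    rw [hterm]
    exact A.mul_mem (A.mul_mem (natCast_mem A c) (hf q.1)) (hg q.2)

theorem mem_boundedDenomSubring {A : Subring R} {d : ℕ → ℕ} {hd : ∀ i j, d i * d j ∣ d (i + j)}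
    {f : R⟦X⟧} : f ∈ boundedDenomSubring A d hd ↔ ∀ i, (d i : R) * coeff i f ∈ A :=
  Iff.rfl

end PowerSeries

theorem Subring.exists_mem_eq_div_iff {K : Type*} [Field K] (A : Subring K) {x c : K}
    (hc : c ≠ 0) : (∃ a ∈ A, x = a / c) ↔ c * x ∈ A := by
  constructor
  · rintro ⟨a, ha, rfl⟩
    rwa [mul_div_cancel₀ a hc]
  · exact fun h => ⟨c * x, h, (mul_div_cancel_left₀ x hc).symm⟩

theorem stmt_2_general (p : ℕ) [Fact p.Prime] (e : ℕ) :
    ∃ S : Subring (PowerSeries ℚ_[p]),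
      (S : Set (PowerSeries ℚ_[p])) =
        {f : PowerSeries ℚ_[p] |
          ∀ i : ℕ, ∃ a : ℤ_[p],
            (PowerSeries.coeff (R := ℚ_[p]) i) f =
              (a : ℚ_[p]) / (Nat.factorial (i / e) : ℚ_[p])} := by
  refine ⟨boundedDenomSubring (PadicInt.subring p) (fun i => (i / e)!)
    (Nat.factorial_div_mul_factorial_div_dvd e), ?_⟩
  ext f
  refine mem_boundedDenomSubring.trans (forall_congr' fun i => ?_)
  rw [← Subring.exists_mem_eq_div_iff _ (Nat.cast_ne_zero.2 (Nat.factorial_ne_zero _))]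
  exact ⟨fun ⟨a, ha, h⟩ => ⟨⟨a, ha⟩, h⟩, fun ⟨a, h⟩ => ⟨a, a.2, h⟩⟩

/-- Fix a prime `p` and an integer `e ≥ 1`. The set of formal power series
`Σ_{i≥0} a_i · t^i/⌊i/e⌋!` in `ℚ_p[[t]]` with all `a_i ∈ ℤ_p` is a subring of
`ℚ_p[[t]]`. -/
theorem stmt_2 (p : ℕ) [Fact p.Prime] (e : ℕ) (he : 1 ≤ e) :
    ∃ S : Subring (PowerSeries ℚ_[p]),
      (S : Set (PowerSeries ℚ_[p])) =
        {f : PowerSeries ℚ_[p] |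
          ∀ i : ℕ, ∃ a : ℤ_[p],
            (PowerSeries.coeff (R := ℚ_[p]) i) f =
              (a : ℚ_[p]) / (Nat.factorial (i / e) : ℚ_[p])} :=
  stmt_2_general p e
end

section
/- Let k ≥ e ≥ 1 and n ≥ 1 be natural numbers and p a prime. Then v_p(⌊k·p^n/e⌋!) ≥ v_p(⌊k/e⌋!) + p^(n-1). -/
lemma padicValNat_mono_of_dvd {p a b : ℕ} [Fact p.Prime] (hb : b ≠ 0) (h : a ∣ b) :
    padicValNat p a ≤ padicValNat p b :=
  (padicValNat_dvd_iff_le hb).mp (pow_padicValNat_dvd.trans h)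

lemma fact_val_pow_mul (p m : ℕ) [Fact p.Prime] (hm : 1 ≤ m) :
    ∀ n, 1 ≤ n →
      padicValNat p (Nat.factorial m) + p ^ (n - 1) ≤
        padicValNat p (Nat.factorial (m * p ^ n))
  | 0, h => by omega
  | n + 1, _ => by
    have key : m * p ^ (n + 1) = p * (m * p ^ n) := by ring
    rw [key, padicValNat_factorial_mul]
    have h1 : padicValNat p (Nat.factorial m) ≤ padicValNat p (Nat.factorial (m * p ^ n)) :=
      padicValNat_mono_of_dvd (Nat.factorial_ne_zero _)
        (Nat.factorial_dvd_factorial (Nat.le_mul_of_pos_right m (pow_pos (Fact.out (p := p.Prime)).pos n)))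
    have h2 : p ^ n ≤ m * p ^ n := Nat.le_mul_of_pos_left _ hm
    simpa using add_le_add h1 h2

/-- For `k ≥ e ≥ 1`, `n ≥ 1` and `p` prime:
`v_p(⌊k·p^n/e⌋!) ≥ v_p(⌊k/e⌋!) + p^(n-1)`. -/
theorem stmt_3 (p k e n : ℕ) (hp : p.Prime) (he : 1 ≤ e) (hk : e ≤ k) (hn : 1 ≤ n) :
    padicValNat p (Nat.factorial (k / e)) + p ^ (n - 1) ≤
      padicValNat p (Nat.factorial (k * p ^ n / e)) := by
  haveI : Fact p.Prime := ⟨hp⟩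
  set m := k / e with hm
  have hm1 : 1 ≤ m := (Nat.one_le_div_iff he).mpr hk
  have hle : m * p ^ n ≤ k * p ^ n / e := by
    rw [Nat.le_div_iff_mul_le he]
    calc m * p ^ n * e = m * e * p ^ n := by ring
    _ ≤ k * p ^ n := Nat.mul_le_mul_right _ (Nat.div_mul_le_self k e)
  calc padicValNat p (Nat.factorial m) + p ^ (n - 1)
      ≤ padicValNat p (Nat.factorial (m * p ^ n)) := fact_val_pow_mul p m hm1 n hn
    _ ≤ padicValNat p (Nat.factorial (k * p ^ n / e)) :=
      padicValNat_mono_of_dvd (Nat.factorial_ne_zero _) (Nat.factorial_dvd_factorial hle)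
end

section
/- Let p be a prime, D a finite-dimensional ℚ_p-vector space, φ : D → D a bijective ℚ_p-linear map, and L ⊆ D a ℤ_p-lattice (finitely generated ℤ_p-submodule spanning D) such that φ^{-1}(L) ⊆ p²·L. Then 1 − p·φ : D → D is bijective. -/
/-!
The `ℤ_p`-module `E = L ∩ ker (1 - pφ)` is finitely generated, and it is `p`-divisible: if
`y = pφ y ∈ L` then `φ (p y) = y ∈ L`, so `p y ∈ p² L`, i.e. `y = p w` with `w ∈ L`, and `w` is
again fixed by `pφ`. Nakayama's lemma over the local ring `ℤ_p` gives `E = 0`. As `L` spans `D`,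
every vector of `ker (1 - pφ)` has a nonzero multiple in `L`, hence in `E`, so the kernel is zero
and the endomorphism `1 - pφ` of the finite-dimensional space `D` is bijective.
-/

open IsLocalRing

section Localization

variable {R : Type*} [CommRing R] {S : Type*} [CommRing S] [Algebra R S]
  {N : Type*} [AddCommGroup N] [Module R N] [Module S N] [IsScalarTower R S N]

theorem IsLocalization.mk'_one_smul_smul (M : Submonoid R) [IsLocalization M S] (z : M)
    (x : N) : IsLocalization.mk' S (1 : R) z • ((z : R) • x) = x := by
  rw [← algebraMap_smul S (z : R) x, smul_smul, IsLocalization.mk'_spec, map_one, one_smul]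

theorem Submodule.exists_smul_mem_of_mem_span (M : Submonoid R) [IsLocalization M S]
    {L : Submodule R N} {x : N} (hx : x ∈ Submodule.span S (L : Set N)) :
    ∃ z : M, (z : R) • x ∈ L := by
  obtain ⟨y, hy, z, rfl⟩ := (IsLocalization.mem_span_iff M).mp hx
  refine ⟨z, ?_⟩
  rwa [← algebraMap_smul S (z : R), smul_smul, IsLocalization.mk'_spec', map_one, one_smul,
    ← Submodule.span_eq L]

theorem Submodule.eq_bot_of_inf_restrictScalars_eq_bot (M : Submonoid R) [IsLocalization M S]
    {L : Submodule R N} (hL : Submodule.span S (L : Set N) = ⊤) {K : Submodule S N}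
    (hK : L ⊓ K.restrictScalars R = ⊥) : K = ⊥ := by
  refine (Submodule.eq_bot_iff K).mpr fun x hx => ?_
  obtain ⟨z, hz⟩ := Submodule.exists_smul_mem_of_mem_span M (hL ▸ Submodule.mem_top : x ∈ _)
  have hzK : (z : R) • x ∈ L ⊓ K.restrictScalars R := ⟨hz, K.smul_of_tower_mem _ hx⟩
  rw [hK, Submodule.mem_bot] at hzK
  rw [← IsLocalization.mk'_one_smul_smul M (S := S) z x, hzK, smul_zero]

end Localization

theorem Submodule.eq_bot_of_forall_eq_smul {R M : Type*} [CommRing R] [IsLocalRing R]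
    [AddCommGroup M] [Module R M] {N : Submodule R M} (hN : N.FG) {π : R}
    (hπ : π ∈ maximalIdeal R) (h : ∀ y ∈ N, ∃ w ∈ N, y = π • w) : N = ⊥ := by
  refine Submodule.eq_bot_of_le_smul_of_le_jacobson_bot (Ideal.span {π}) N hN ?_ ?_
  · intro y hy
    obtain ⟨w, hw, rfl⟩ := h y hy
    exact Submodule.smul_mem_smul (Ideal.mem_span_singleton_self π) hw
  · exact ((Ideal.span_singleton_le_iff_mem _).mpr hπ).trans (maximalIdeal_le_jacobson ⊥)

section Padic

variable {p : ℕ} [Fact p.Prime] {D : Type*} [AddCommGroup D] [Module ℚ_[p] D] [Module ℤ_[p] D]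
  [IsScalarTower ℤ_[p] ℚ_[p] D]

theorem PadicInt.natCast_smul_eq (n : ℕ) (x : D) : (n : ℤ_[p]) • x = (n : ℚ_[p]) • x := by
  rw [← algebraMap_smul ℚ_[p] (n : ℤ_[p]) x, map_natCast]

theorem exists_eq_p_smul_of_mem_inf_ker (φ : D →ₗ[ℚ_[p]] D) {L : Submodule ℤ_[p] D}
    (hpre : ∀ x : D, φ x ∈ L → ∃ y ∈ L, x = ((p : ℤ_[p]) ^ 2) • y) :
    ∀ y ∈ L ⊓ (LinearMap.ker (LinearMap.id - (p : ℚ_[p]) • φ)).restrictScalars ℤ_[p],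
      ∃ w ∈ L ⊓ (LinearMap.ker (LinearMap.id - (p : ℚ_[p]) • φ)).restrictScalars ℤ_[p],
        y = (p : ℤ_[p]) • w := by
  rintro y ⟨hyL, hyK⟩
  have hpQ : (p : ℚ_[p]) ≠ 0 := by exact_mod_cast (Fact.out : p.Prime).ne_zero
  have hfix : y = (p : ℚ_[p]) • φ y := by
    simpa [sub_eq_zero] using hyK
  obtain ⟨w, hwL, hw⟩ := hpre ((p : ℚ_[p]) • y) (by rwa [map_smul, ← hfix])
  have hyw : y = (p : ℚ_[p]) • w := by
    apply smul_right_injective D hpQ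
    change (p : ℚ_[p]) • y = (p : ℚ_[p]) • ((p : ℚ_[p]) • w)
    rw [hw, pow_two, ← smul_smul, PadicInt.natCast_smul_eq, PadicInt.natCast_smul_eq]
  refine ⟨w, ⟨hwL, ?_⟩, by rw [PadicInt.natCast_smul_eq, hyw]⟩
  have hwK : (p : ℚ_[p]) • ((LinearMap.id : D →ₗ[ℚ_[p]] D) - (p : ℚ_[p]) • φ) w = 0 := by
    rw [← map_smul, ← hyw]
    exact hyK
  exact (smul_eq_zero.mp hwK).resolve_left hpQ

end Padic

theorem stmt_9_general (p : ℕ) [Fact p.Prime]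
    (D : Type*) [AddCommGroup D] [Module ℚ_[p] D] [FiniteDimensional ℚ_[p] D]
    [Module ℤ_[p] D] [IsScalarTower ℤ_[p] ℚ_[p] D]
    (φ : D →ₗ[ℚ_[p]] D)
    (L : Submodule ℤ_[p] D) (hFG : L.FG)
    (hspan : Submodule.span ℚ_[p] (L : Set D) = ⊤)
    (hpre : ∀ x : D, φ x ∈ L → ∃ y ∈ L, x = ((p : ℤ_[p]) ^ 2) • y) :
    Function.Bijective ((LinearMap.id : D →ₗ[ℚ_[p]] D) - (p : ℚ_[p]) • φ) := by
  have hinj : Function.Injective ((LinearMap.id : D →ₗ[ℚ_[p]] D) - (p : ℚ_[p]) • φ) := by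
    rw [← LinearMap.ker_eq_bot]
    refine Submodule.eq_bot_of_inf_restrictScalars_eq_bot (nonZeroDivisors ℤ_[p]) hspan ?_
    exact Submodule.eq_bot_of_forall_eq_smul (hFG.of_le inf_le_left)
      ((mem_maximalIdeal _).mpr PadicInt.p_nonunit) (exists_eq_p_smul_of_mem_inf_ker φ hpre)
  exact ⟨hinj, LinearMap.injective_iff_surjective.mp hinj⟩

/-- Let `p` be a prime, `D` a finite-dimensional `ℚ_p`-vector space,
`φ : D → D` a bijective `ℚ_p`-linear map and `L ⊆ D` a `ℤ_p`-lattice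
(finitely generated `ℤ_p`-submodule spanning `D`) such that
`φ⁻¹(L) ⊆ p²·L`.  Then `1 − p·φ : D → D` is bijective. -/
theorem stmt_9 (p : ℕ) [Fact p.Prime]
    (D : Type*) [AddCommGroup D] [Module ℚ_[p] D] [FiniteDimensional ℚ_[p] D]
    [Module ℤ_[p] D] [IsScalarTower ℤ_[p] ℚ_[p] D]
    (φ : D →ₗ[ℚ_[p]] D) (hφ : Function.Bijective φ)
    (L : Submodule ℤ_[p] D) (hFG : L.FG)
    (hspan : Submodule.span ℚ_[p] (L : Set D) = ⊤)
    (hpre : ∀ x : D, φ x ∈ L → ∃ y ∈ L, x = ((p : ℤ_[p]) ^ 2) • y) :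
    Function.Bijective ((LinearMap.id : D →ₗ[ℚ_[p]] D) - (p : ℚ_[p]) • φ) :=
  stmt_9_general p D φ L hFG hspan hpre
end
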